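/- Suppose price schedules satisfy p(x) ≥ p^i(x) := u_i(x)/ξ_i − η_i/ξ_i for all x ∈ [0, X̄] with ξ_i > 0, η_i ≥ 0, where u_j, u_k are strictly decreasing with the pairwise curvature ordering (j more risk averse than k, j < k). Then g_{jk}(x) = p^j(x) − p^k(x) is strictly quasi-concave, and consequently: if p^j(x') = p(x') and p^j(x'') = p(x'') for x' < x < x'' and p^k ≤ p everywhere, then p^k(x) < p(x). -/

import Mathlib

/-!
Write `g = p^j - p^k`, so `g' = u_j'/ξ_j - u_k'/ξ_k`, which is nonpositive exactly when
`log (-u_j') - log (-u_k') ≥ log ξ_j - log ξ_k`. The curvature ordering says that the left-hand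
side has derivative `u_j''/u_j' - u_k''/u_k' > 0`, so `g'` changes sign at most once, from `+` to
`-`: `g` strictly rises and then strictly falls, which is strict quasi-concavity. If `p^j` touches
`p ≥ p^k` at `x'` and `x''`, then `g ≥ 0` at both points, hence `g(x) > 0`, i.e.
`p^k(x) < p^j(x) ≤ p(x)`.
-/

open Set

def StrictQuasiconcaveOn (D : Set ℝ) (f : ℝ → ℝ) : Prop :=
  ∀ x ∈ D, ∀ y ∈ D, x ≠ y → ∀ l ∈ Ioo (0:ℝ) 1, min (f x) (f y) < f (l * x + (1 - l) * y)

theorem strictQuasiconcaveOn_of_min_lt {D : Set ℝ} {f : ℝ → ℝ}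
    (h : ∀ a ∈ D, ∀ m b : ℝ, a < m → m < b → b ∈ D → min (f a) (f b) < f m) :
    StrictQuasiconcaveOn D f := by
  intro x hx y hy hxy l ⟨hl0, hl1⟩
  rcases hxy.lt_or_gt with hlt | hgt
  · exact h x hx _ y (by nlinarith) (by nlinarith) hy
  · rw [min_comm]
    exact h y hy _ x (by nlinarith) (by nlinarith) hx

theorem min_lt_of_hasDerivAt_of_crossing {D : Set ℝ} (hD : Convex ℝ D) {f f' : ℝ → ℝ}
    (hf : ∀ x ∈ D, HasDerivAt f (f' x) x)
    (hcross : ∀ a ∈ D, ∀ b ∈ D, a < b → f' a ≤ 0 → f' b < 0)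
    {a m b : ℝ} (ha : a ∈ D) (ham : a < m) (hmb : m < b) (hb : b ∈ D) :
    min (f a) (f b) < f m := by
  have hsub : ∀ {c d}, c ∈ D → d ∈ D → Icc c d ⊆ D := fun hc hd => hD.ordConnected.out hc hd
  have hm : m ∈ D := hsub ha hb ⟨ham.le, hmb.le⟩
  have hcont : ContinuousOn f D := fun x hx => (hf x hx).continuousAt.continuousWithinAt
  have hderiv : ∀ {c d y}, c ∈ D → d ∈ D → y ∈ interior (Icc c d) → deriv f y = f' y :=
    fun hc hd hy => (hf _ (hsub hc hd (interior_subset hy))).deriv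
  by_cases hfm : f' m ≤ 0
  · have hanti : StrictAntiOn f (Icc m b) := by
      refine strictAntiOn_of_deriv_neg (convex_Icc m b) (hcont.mono (hsub hm hb)) fun y hy => ?_
      rw [hderiv hm hb hy]
      rw [interior_Icc] at hy
      exact hcross m hm y (hsub hm hb (Ioo_subset_Icc_self hy)) hy.1 hfm
    exact (min_le_right _ _).trans_lt (hanti ⟨le_rfl, hmb.le⟩ ⟨hmb.le, le_rfl⟩ hmb)
  · have hmono : StrictMonoOn f (Icc a m) := by
      refine strictMonoOn_of_deriv_pos (convex_Icc a m) (hcont.mono (hsub ha hm)) fun y hy => ?_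
      rw [hderiv ha hm hy]
      rw [interior_Icc] at hy
      by_contra! hfy
      exact hfm (hcross y (hsub ha hm (Ioo_subset_Icc_self hy)) m hm hy.2 hfy).le
    exact (min_le_left _ _).trans_lt (hmono ⟨le_rfl, ham.le⟩ ⟨ham.le, le_rfl⟩ ham)

theorem strictMonoOn_log_neg_sub_log_neg {D : Set ℝ} (hD : Convex ℝ D) {v w : ℝ → ℝ}
    (hv : Differentiable ℝ v) (hw : Differentiable ℝ w)
    (hv0 : ∀ x ∈ D, v x < 0) (hw0 : ∀ x ∈ D, w x < 0)
    (hvw : ∀ x ∈ D, deriv w x / w x < deriv v x / v x) :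
    StrictMonoOn (fun x => Real.log (-v x) - Real.log (-w x)) D := by
  have hlog : ∀ {z : ℝ → ℝ}, Differentiable ℝ z → ∀ x, z x < 0 →
      HasDerivAt (fun y => Real.log (-z y)) (deriv z x / z x) x := fun hz x hzx => by
    simpa [neg_div_neg_eq] using (hz x).hasDerivAt.neg.log (neg_ne_zero.mpr hzx.ne)
  have hder : ∀ x ∈ D, HasDerivAt (fun x => Real.log (-v x) - Real.log (-w x))
      (deriv v x / v x - deriv w x / w x) x :=
    fun x hx => (hlog hv x (hv0 x hx)).sub (hlog hw x (hw0 x hx))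
  refine strictMonoOn_of_deriv_pos hD
    (fun x hx => (hder x hx).continuousAt.continuousWithinAt) fun x hx => ?_
  rw [(hder x (interior_subset hx)).deriv]
  exact sub_pos.mpr (hvw x (interior_subset hx))

theorem div_sub_div_neg_of_strictMonoOn_log {D : Set ℝ} {v w : ℝ → ℝ}
    (hmono : StrictMonoOn (fun x => Real.log (-v x) - Real.log (-w x)) D)
    (hv0 : ∀ x ∈ D, v x < 0) (hw0 : ∀ x ∈ D, w x < 0) {ξ ζ : ℝ} (hξ : 0 < ξ) (hζ : 0 < ζ) :
    ∀ a ∈ D, ∀ b ∈ D, a < b → v a / ξ - w a / ζ ≤ 0 → v b / ξ - w b / ζ < 0 := by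
  intro a ha b hb hab hfa
  have hpos : ∀ x ∈ D, 0 < -v x / ξ ∧ 0 < -w x / ζ := fun x hx =>
    ⟨div_pos (neg_pos.2 (hv0 x hx)) hξ, div_pos (neg_pos.2 (hw0 x hx)) hζ⟩
  have hlog : ∀ x ∈ D, Real.log (-v x / ξ) - Real.log (-w x / ζ)
      = (Real.log (-v x) - Real.log (-w x)) - (Real.log ξ - Real.log ζ) := fun x hx => by
    rw [Real.log_div (neg_ne_zero.2 (hv0 x hx).ne) hξ.ne',
      Real.log_div (neg_ne_zero.2 (hw0 x hx).ne) hζ.ne']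
    ring
  have hle : Real.log (-w a / ζ) ≤ Real.log (-v a / ξ) :=
    Real.log_le_log (hpos a ha).2 (by rw [neg_div, neg_div]; linarith)
  have hlt : Real.log (-w b / ζ) < Real.log (-v b / ξ) := by
    linarith [hmono ha hb hab, hlog a ha, hlog b hb]
  have := (Real.log_lt_log_iff (hpos b hb).2 (hpos b hb).1).1 hlt
  rw [neg_div, neg_div] at this
  linarith

theorem stmt16_general (Xb : ℝ)
    (uj uk : ℝ → ℝ)
    (hj2 : ContDiff ℝ 2 uj) (hk2 : ContDiff ℝ 2 uk)
    (hjder : ∀ x : ℝ, 0 ≤ x → deriv uj x < 0)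
    (hkder : ∀ x : ℝ, 0 ≤ x → deriv uk x < 0)
    (hcurv : ∀ x : ℝ, 0 ≤ x →
      deriv (deriv uk) x / deriv uk x < deriv (deriv uj) x / deriv uj x)
    (ξj ξk ηj ηk : ℝ) (hξj : 0 < ξj) (hξk : 0 < ξk)
    (p : ℝ → ℝ)
    (hpj : ∀ x ∈ Icc (0:ℝ) Xb, uj x / ξj - ηj / ξj ≤ p x)
    (hpk : ∀ x ∈ Icc (0:ℝ) Xb, uk x / ξk - ηk / ξk ≤ p x) :
    -- g_{jk} is strictly quasi-concave on [0, X̄]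
    (∀ x' ∈ Icc (0:ℝ) Xb, ∀ x'' ∈ Icc (0:ℝ) Xb, x' ≠ x'' → ∀ l ∈ Ioo (0:ℝ) 1,
      min ((uj x' / ξj - ηj / ξj) - (uk x' / ξk - ηk / ξk))
          ((uj x'' / ξj - ηj / ξj) - (uk x'' / ξk - ηk / ξk))
        < (uj (l * x' + (1 - l) * x'') / ξj - ηj / ξj)
          - (uk (l * x' + (1 - l) * x'') / ξk - ηk / ξk)) ∧
    -- consequence: strict price slack for the less risk-averse type in between
    (∀ x' x x'' : ℝ, 0 ≤ x' → x' < x → x < x'' → x'' ≤ Xb →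
      uj x' / ξj - ηj / ξj = p x' → uj x'' / ξj - ηj / ξj = p x'' →
      uk x / ξk - ηk / ξk < p x) := by
  set g : ℝ → ℝ := fun x => (uj x / ξj - ηj / ξj) - (uk x / ξk - ηk / ξk)
  have hg : ∀ x, HasDerivAt g (deriv uj x / ξj - deriv uk x / ξk) x := fun x =>
    (((hj2.differentiable two_ne_zero x).hasDerivAt.div_const ξj).sub_const _).sub
      (((hk2.differentiable two_ne_zero x).hasDerivAt.div_const ξk).sub_const _)
  have hcross := div_sub_div_neg_of_strictMonoOn_log
    (strictMonoOn_log_neg_sub_log_neg (convex_Ici 0) hj2.differentiable_deriv_two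
      hk2.differentiable_deriv_two hjder hkder hcurv) hjder hkder hξj hξk
  have hmin : ∀ {a m b : ℝ}, 0 ≤ a → a < m → m < b → min (g a) (g b) < g m :=
    fun ha ham hmb => min_lt_of_hasDerivAt_of_crossing (convex_Ici 0) (fun x _ => hg x) hcross
      ha ham hmb (ha.trans (ham.trans hmb).le)
  refine ⟨strictQuasiconcaveOn_of_min_lt fun a ha m b ham hmb _ => hmin ha.1 ham hmb, ?_⟩
  intro x' x x'' hx' hx'x hxx'' hx'' hx'_touch hx''_touch
  have hgx' : 0 ≤ g x' := by linarith [hpk x' ⟨hx', by linarith⟩]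
  have hgx'' : 0 ≤ g x'' := by linarith [hpk x'' ⟨by linarith, hx''⟩]
  have hgx : 0 < g x := (le_min hgx' hgx'').trans_lt (hmin hx' hx'x hxx'')
  linarith [hpj x ⟨by linarith, by linarith⟩]

/-- Claim D2: with `p^i(x) = u_i(x)/ξ_i − η_i/ξ_i` for types `j` (more
risk averse) and `k` (less risk averse) ordered by the curvature condition, the
difference `g_{jk} = p^j − p^k` is strictly quasi-concave on `[0, X̄]`; consequently,
if the equilibrium price `p` dominates both `p^j, p^k` and touches `p^j` at
`x' < x < x''`, then `p^k(x) < p(x)`. -/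
theorem stmt16 (Xb : ℝ) (hXb : 0 < Xb)
    (uj uk : ℝ → ℝ)
    (hj2 : ContDiff ℝ 2 uj) (hk2 : ContDiff ℝ 2 uk)
    (hjanti : StrictAntiOn uj (Ici 0)) (hkanti : StrictAntiOn uk (Ici 0))
    (hjder : ∀ x : ℝ, 0 ≤ x → deriv uj x < 0)
    (hkder : ∀ x : ℝ, 0 ≤ x → deriv uk x < 0)
    (hcurv : ∀ x : ℝ, 0 ≤ x →
      deriv (deriv uk) x / deriv uk x < deriv (deriv uj) x / deriv uj x)
    (ξj ξk ηj ηk : ℝ) (hξj : 0 < ξj) (hξk : 0 < ξk) (hηj : 0 ≤ ηj) (hηk : 0 ≤ ηk)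
    (p : ℝ → ℝ)
    (hpj : ∀ x ∈ Icc (0:ℝ) Xb, uj x / ξj - ηj / ξj ≤ p x)
    (hpk : ∀ x ∈ Icc (0:ℝ) Xb, uk x / ξk - ηk / ξk ≤ p x) :
    -- g_{jk} is strictly quasi-concave on [0, X̄]
    (∀ x' ∈ Icc (0:ℝ) Xb, ∀ x'' ∈ Icc (0:ℝ) Xb, x' ≠ x'' → ∀ l ∈ Ioo (0:ℝ) 1,
      min ((uj x' / ξj - ηj / ξj) - (uk x' / ξk - ηk / ξk))
          ((uj x'' / ξj - ηj / ξj) - (uk x'' / ξk - ηk / ξk))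
        < (uj (l * x' + (1 - l) * x'') / ξj - ηj / ξj)
          - (uk (l * x' + (1 - l) * x'') / ξk - ηk / ξk)) ∧
    -- consequence: strict price slack for the less risk-averse type in between
    (∀ x' x x'' : ℝ, 0 ≤ x' → x' < x → x < x'' → x'' ≤ Xb →
      uj x' / ξj - ηj / ξj = p x' → uj x'' / ξj - ηj / ξj = p x'' →
      uk x / ξk - ηk / ξk < p x) :=
  stmt16_general Xb uj uk hj2 hk2 hjder hkder hcurv ξj ξk ηj ηk hξj hξk p hpj hpk
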